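/- arXiv:2212.01648 — 5 statements merged into one kernel-verified Lean document; each statement's English description precedes it below -/
import Mathlib

section
/- The pairwise matching cost for min-max pairs satisfies the triangle inequality: for real pairs (a1,a2), (b1,b2), (c1,c2), min(|a1-c1|+|a2-c2|, |a1-a2|+|c1-c2|) ≤ min(|a1-b1|+|a2-b2|, |a1-a2|+|b1-b2|) + min(|b1-c1|+|b2-c2|, |b1-b2|+|c1-c2|). -/
/-- The pairwise matching cost for min-max pairs satisfies the triangle inequality. -/
theorem pairwise_matching_cost_triangle (a1 a2 b1 b2 c1 c2 : ℝ) :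
    min (|a1 - c1| + |a2 - c2|) (|a1 - a2| + |c1 - c2|) ≤
      min (|a1 - b1| + |a2 - b2|) (|a1 - a2| + |b1 - b2|) +
      min (|b1 - c1| + |b2 - c2|) (|b1 - b2| + |c1 - c2|) := by
  have hb : (0:ℝ) ≤ |b1 - b2| := abs_nonneg _
  have h1 : |a1 - c1| ≤ |a1 - b1| + |b1 - c1| := abs_sub_le _ _ _
  have h2 : |a2 - c2| ≤ |a2 - b2| + |b2 - c2| := abs_sub_le _ _ _
  have h3 : |a1 - a2| ≤ |a1 - b1| + |b1 - a2| := abs_sub_le _ _ _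
  have h3' : |b1 - a2| ≤ |b1 - b2| + |b2 - a2| := abs_sub_le _ _ _
  have h3'' : |b2 - a2| = |a2 - b2| := abs_sub_comm _ _
  have h4 : |c1 - c2| ≤ |c1 - b1| + |b1 - c2| := abs_sub_le _ _ _
  have h4' : |b1 - c2| ≤ |b1 - b2| + |b2 - c2| := abs_sub_le _ _ _
  have h4'' : |c1 - b1| = |b1 - c1| := abs_sub_comm _ _
  rcases min_cases (|a1 - b1| + |a2 - b2|) (|a1 - a2| + |b1 - b2|) with ⟨e1, _⟩ | ⟨e1, _⟩ <;>
  rcases min_cases (|b1 - c1| + |b2 - c2|) (|b1 - b2| + |c1 - c2|) with ⟨e2, _⟩ | ⟨e2, _⟩ <;>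
  rw [e1, e2]
  · exact le_trans (min_le_left _ _) (by linarith)
  · exact le_trans (min_le_right _ _) (by linarith)
  · exact le_trans (min_le_right _ _) (by linarith)
  · exact le_trans (min_le_right _ _) (by linarith)
end

section
/- The DOPE distance restricted to critical point time series is a genuine metric: dope(x^c, y^c) = 0 if and only if x^c = y^c. -/
/-- `AlignCost x y c` holds when some DOPE alignment of the critical point time
series `x` and `y` — an order-preserving matching (with cost `|xᵢ - yⱼ|` per
matched pair) together with removals of adjacent pairs (with cost equal to the
height difference), every point covered exactly once — has total cost `c`. -/
inductive AlignCost : List ℝ → List ℝ → ℝ → Prop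
  | nil : AlignCost [] [] 0
  | match' (a b : ℝ) {xs ys : List ℝ} {c : ℝ} (h : AlignCost xs ys c) :
      AlignCost (a :: xs) (b :: ys) (|a - b| + c)
  | delX (a b : ℝ) {xs ys : List ℝ} {c : ℝ} (h : AlignCost xs ys c) :
      AlignCost (a :: b :: xs) ys (|a - b| + c)
  | delY (a b : ℝ) {xs ys : List ℝ} {c : ℝ} (h : AlignCost xs ys c) :
      AlignCost xs (a :: b :: ys) (|a - b| + c)

/-- The DOPE distance between two critical point time series:
the minimal cost over all alignments. -/
noncomputable def dope (x y : List ℝ) : ℝ := sInf {c | AlignCost x y c}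

lemma alignCost_nonneg {x y : List ℝ} {c : ℝ} (h : AlignCost x y c) : 0 ≤ c := by
  induction h with
  | nil => exact le_refl 0
  | match' a b h ih => exact add_nonneg (abs_nonneg _) ih
  | delX a b h ih => exact add_nonneg (abs_nonneg _) ih
  | delY a b h ih => exact add_nonneg (abs_nonneg _) ih

lemma alignCost_self (x : List ℝ) : AlignCost x x 0 := by
  induction x with
  | nil => exact AlignCost.nil
  | cons a xs ih => simpa using AlignCost.match' a a ih

lemma alignCost_exists : ∀ (n : ℕ) (x y : List ℝ), x.length + y.length = n →
    x.length % 2 = y.length % 2 → ∃ c, AlignCost x y c := by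
  intro n
  induction n using Nat.strong_induction_on with
  | _ n ih =>
    intro x y hn hp
    rcases x with _ | ⟨a, _ | ⟨a', xs⟩⟩
    · rcases y with _ | ⟨b, _ | ⟨b', ys⟩⟩
      · exact ⟨0, AlignCost.nil⟩
      · simp at hp
      · obtain ⟨c, hc⟩ := ih (([] : List ℝ).length + ys.length) (by simp at hn ⊢; try omega)
          [] ys rfl (by simp at hp ⊢; try omega)
        exact ⟨_, AlignCost.delY b b' hc⟩
    · rcases y with _ | ⟨b, _ | ⟨b', ys⟩⟩
      · simp at hp
      · exact ⟨_, AlignCost.match' a b AlignCost.nil⟩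
      · obtain ⟨c, hc⟩ := ih ([a].length + ys.length) (by simp at hn ⊢; try omega) [a] ys rfl
          (by simp at hp ⊢; try omega)
        exact ⟨_, AlignCost.delY b b' hc⟩
    · obtain ⟨c, hc⟩ := ih (xs.length + y.length) (by simp at hn ⊢; try omega) xs y rfl
        (by simp at hp ⊢; try omega)
      exact ⟨_, AlignCost.delX a a' hc⟩

lemma alignCost_finite : ∀ (n : ℕ) (x y : List ℝ), x.length + y.length = n →
    {c | AlignCost x y c}.Finite := by
  intro n
  induction n using Nat.strong_induction_on with
  | _ n ih =>
    intro x y hn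
    rcases x with _ | ⟨a, _ | ⟨a', xs⟩⟩ <;> rcases y with _ | ⟨b, _ | ⟨b', ys⟩⟩
    · exact (Set.finite_singleton 0).subset (by rintro c hc; cases hc; simp)
    · exact Set.finite_empty.subset (by rintro c hc; cases hc)
    · refine (((ih (ys.length) (by simp at hn ⊢; try omega) [] ys (by simp only [List.length_cons, List.length_nil]; try omega)).image
        (fun c => |b - b'| + c)).subset ?_)
      rintro c hc
      cases hc with
      | delY a b h => exact ⟨_, h, rfl⟩
    · exact Set.finite_empty.subset (by rintro c hc; cases hc)
    · refine (((ih 0 (by simp at hn ⊢; try omega) [] [] (by simp only [List.length_cons, List.length_nil]; try omega)).image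
        (fun c => |a - b| + c)).subset ?_)
      rintro c hc
      cases hc with
      | match' a b h => exact ⟨_, h, rfl⟩
    · refine ((((ih (1 + ys.length) (by simp at hn ⊢; try omega) [] (b' :: ys) (by simp only [List.length_cons, List.length_nil]; try omega)).image
        (fun c => |a - b| + c)).union
        ((ih (1 + ys.length) (by simp at hn ⊢; try omega) [a] ys (by simp only [List.length_cons, List.length_nil]; try omega)).image
        (fun c => |b - b'| + c))).subset ?_)
      rintro c hc
      cases hc with
      | match' a b h => exact Or.inl ⟨_, h, rfl⟩
      | delY a b h => exact Or.inr ⟨_, h, rfl⟩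
    · refine (((ih (xs.length) (by simp at hn ⊢; try omega) xs [] (by simp only [List.length_cons, List.length_nil]; try omega)).image
        (fun c => |a - a'| + c)).subset ?_)
      rintro c hc
      cases hc with
      | delX a b h => exact ⟨_, h, rfl⟩
    · refine ((((ih (xs.length + 1) (by simp at hn ⊢; try omega) (a' :: xs) [] (by simp only [List.length_cons, List.length_nil]; try omega)).image
        (fun c => |a - b| + c)).union
        ((ih (xs.length + 1) (by simp at hn ⊢; try omega) xs [b] (by simp only [List.length_cons, List.length_nil]; try omega)).image
        (fun c => |a - a'| + c))).subset ?_)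
      rintro c hc
      cases hc with
      | match' a b h => exact Or.inl ⟨_, h, rfl⟩
      | delX a b h => exact Or.inr ⟨_, h, rfl⟩
    · have f1 := (ih (xs.length + 1 + (ys.length + 1)) (by simp at hn ⊢; try omega)
          (a' :: xs) (b' :: ys) (by simp only [List.length_cons, List.length_nil]; try omega)).image (fun c => |a - b| + c)
      have f2 := (ih (xs.length + (ys.length + 2)) (by simp at hn ⊢; try omega)
          xs (b :: b' :: ys) (by simp only [List.length_cons, List.length_nil]; try omega)).image (fun c => |a - a'| + c)
      have f3 := (ih (xs.length + 2 + ys.length) (by simp at hn ⊢; try omega)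
          (a :: a' :: xs) ys (by simp only [List.length_cons, List.length_nil]; try omega)).image (fun c => |b - b'| + c)
      refine ((f1.union f2).union f3).subset ?_
      rintro c hc
      cases hc with
      | match' a b h => exact Or.inl (Or.inl ⟨_, h, rfl⟩)
      | delX a b h => exact Or.inl (Or.inr ⟨_, h, rfl⟩)
      | delY a b h => exact Or.inr ⟨_, h, rfl⟩

lemma alignCost_eq_zero : ∀ {x y : List ℝ} {c : ℝ}, AlignCost x y c →
    x.Chain' (· ≠ ·) → y.Chain' (· ≠ ·) → c = 0 → x = y := by
  intro x y c h
  induction h with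
  | nil => intro _ _ _; rfl
  | match' a b h ih =>
    intro hx hy hc
    have h0 := alignCost_nonneg h
    have h1 := abs_nonneg (a - b)
    have hab : a = b := by
      have : |a - b| = 0 := by linarith
      rwa [abs_eq_zero, sub_eq_zero] at this
    rw [hab, ih hx.tail hy.tail (by linarith)]
  | delX a b h ih =>
    intro hx hy hc
    have hab : a ≠ b := (List.isChain_cons_cons.mp hx).1
    have h0 := alignCost_nonneg h
    have h1 : 0 < |a - b| := abs_pos.mpr (sub_ne_zero.mpr hab)
    linarith
  | delY a b h ih =>
    intro hx hy hc
    have hab : a ≠ b := (List.isChain_cons_cons.mp hy).1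
    have h0 := alignCost_nonneg h
    have h1 : 0 < |a - b| := abs_pos.mpr (sub_ne_zero.mpr hab)
    linarith

/-- Restricted to critical point time series (no two consecutive equal values)
on the same domain, DOPE is a genuine metric: distance zero iff the sequences
are identical. -/
theorem dope_eq_zero_iff (x y : List ℝ)
    (hx : x.Chain' (· ≠ ·)) (hy : y.Chain' (· ≠ ·))
    (hpar : x.length % 2 = y.length % 2) :
    dope x y = 0 ↔ x = y := by
  unfold dope
  constructor
  · intro h0
    have hne : {c | AlignCost x y c}.Nonempty := alignCost_exists _ x y rfl hpar
    have hfin := alignCost_finite _ x y rfl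
    have hmem := hne.csInf_mem hfin
    rw [h0] at hmem
    exact alignCost_eq_zero hmem hx hy rfl
  · rintro rfl
    have h1 : AlignCost x x 0 := alignCost_self x
    exact le_antisymm (csInf_le ⟨0, fun c hc => alignCost_nonneg hc⟩ h1)
      (le_csInf ⟨0, h1⟩ fun c hc => alignCost_nonneg hc)
end

section
/- DOPE is 1-stable: for time series x and y with critical point sequences x^c of length M_c and y^c of length N_c, dope(x,y) ≤ Σ_{i=1}^{max(M_c,N_c)} |x^c_i − y^c_i|, where the shorter sequence is zero-padded. -/
lemma exists_align_nil_right : ∀ (xs : List ℝ), xs.length % 2 = 0 →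
    ∃ c, AlignCost xs [] c ∧ c ≤ ∑ i ∈ Finset.range xs.length, |xs.getD i 0|
  | [], _ => ⟨0, AlignCost.nil, by simp⟩
  | [a], h => by simp at h
  | a :: b :: t, h => by
    obtain ⟨c, hc, hle⟩ := exists_align_nil_right t (by simp at h; omega)
    refine ⟨|a - b| + c, AlignCost.delX a b hc, ?_⟩
    rw [show (a :: b :: t).length = t.length + 1 + 1 by simp,
      Finset.sum_range_succ', Finset.sum_range_succ']
    simp only [List.getD_cons_succ, List.getD_cons_zero]
    have h1 : |a - b| ≤ |a| + |b| := abs_sub a b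
    linarith

lemma exists_align_nil_left : ∀ (ys : List ℝ), ys.length % 2 = 0 →
    ∃ c, AlignCost [] ys c ∧ c ≤ ∑ i ∈ Finset.range ys.length, |ys.getD i 0|
  | [], _ => ⟨0, AlignCost.nil, by simp⟩
  | [a], h => by simp at h
  | a :: b :: t, h => by
    obtain ⟨c, hc, hle⟩ := exists_align_nil_left t (by simp at h; omega)
    refine ⟨|a - b| + c, AlignCost.delY a b hc, ?_⟩
    rw [show (a :: b :: t).length = t.length + 1 + 1 by simp,
      Finset.sum_range_succ', Finset.sum_range_succ']
    simp only [List.getD_cons_succ, List.getD_cons_zero]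
    have h1 : |a - b| ≤ |a| + |b| := abs_sub a b
    linarith

lemma exists_align : ∀ (x y : List ℝ), x.length % 2 = y.length % 2 →
    ∃ c, AlignCost x y c ∧
      c ≤ ∑ i ∈ Finset.range (max x.length y.length), |x.getD i 0 - y.getD i 0|
  | [], ys, h => by
    obtain ⟨c, hc, hle⟩ := exists_align_nil_left ys (by simpa using h.symm)
    refine ⟨c, hc, ?_⟩
    simpa [abs_sub_comm] using hle
  | xs, [], h => by
    obtain ⟨c, hc, hle⟩ := exists_align_nil_right xs (by simpa using h)
    refine ⟨c, hc, ?_⟩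
    simpa using hle
  | a :: t, b :: s, h => by
    obtain ⟨c, hc, hle⟩ := exists_align t s (by simp at h; omega)
    refine ⟨|a - b| + c, AlignCost.match' a b hc, ?_⟩
    rw [show max (a :: t).length (b :: s).length = max t.length s.length + 1 by
      simp [Nat.succ_max_succ], Finset.sum_range_succ']
    simp only [List.getD_cons_succ, List.getD_cons_zero]
    linarith

/-- DOPE is 1-stable: for critical point time series on the same domain,
the DOPE distance is at most the L¹ distance between the (zero-padded)
critical point sequences. -/
theorem dope_one_stable (x y : List ℝ)
    (hpar : x.length % 2 = y.length % 2) :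
    dope x y ≤
      ∑ i ∈ Finset.range (max x.length y.length), |x.getD i 0 - y.getD i 0| := by
  obtain ⟨c, hc, hle⟩ := exists_align x y hpar
  exact csInf_le_of_le ⟨0, fun d hd => alignCost_nonneg hd⟩ hc hle
end

section
/- The DOPE dynamic programming recurrence is correct: defining d_{i,j} by the stated recurrence (base cases deleting all points in adjacent pairs, and general case taking the minimum of matching the last critical points when they are of the same type, deleting the last pair of x, or deleting the last pair of y), d_{M_c,N_c} equals dope(x,y). -/
/-- The DOPE distance as an extended real (`⊤` when no alignment exists). -/
noncomputable def dopeE (x y : List ℝ) : EReal :=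
  sInf {c : EReal | ∃ r : ℝ, AlignCost x y r ∧ c = (r : EReal)}

/-- The DOPE dynamic programming table `d_{i,j}` for 1-indexed critical point
sequences `x`, `y` with min/max sign indicators `xm`, `ym` (`-1` for a min,
`+1` for a max).  Base cases delete all points in adjacent pairs; the general
case takes the minimum of matching the last critical points (when of the same
type), deleting the last pair of `x`, or deleting the last pair of `y`. -/
noncomputable def dp (x y : ℕ → ℝ) (xm ym : ℕ → ℤ) : ℕ → ℕ → EReal
  | 0, 0 => 0
  | i + 1, 0 =>
      if (i + 1) % 2 = 0 then
        (((∑ ℓ ∈ Finset.Icc 1 (i + 1), x ℓ * (xm ℓ : ℝ)) : ℝ) : EReal)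
      else ⊤
  | 0, j + 1 =>
      if (j + 1) % 2 = 0 then
        (((∑ ℓ ∈ Finset.Icc 1 (j + 1), y ℓ * (ym ℓ : ℝ)) : ℝ) : EReal)
      else ⊤
  | i + 1, j + 1 =>
      min (min
        (if xm (i + 1) = ym (j + 1) then
            dp x y xm ym i j + ((|x (i + 1) - y (j + 1)| : ℝ) : EReal)
          else ⊤)
        (if 1 ≤ i then
            dp x y xm ym (i - 1) (j + 1) + ((|x (i + 1) - x i| : ℝ) : EReal)
          else ⊤))
        (if 1 ≤ j then
            dp x y xm ym (i + 1) (j - 1) + ((|y (j + 1) - y j| : ℝ) : EReal)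
          else ⊤)
  termination_by i j => i + j
  decreasing_by all_goals omega


/-!
The table `d` extends prefixes at their right end while an alignment is built from the left, so
`d_{i,j}` is compared with the distance between the reversed prefixes `[x i, …, x 1]` and
`[y j, …, y 1]`; reversal preserves alignments and their costs. That distance satisfies the
Bellman equation of the first move (match the two heads, or delete a leading pair on either
side), which is the recurrence of `d`. The min/max guard only discards matches of `x i` with
`y j` for odd `i + j`, and those have no completion since every alignment covers an even number
of points. On a series starting with a minimum, deleting the pair `x (2k-1), x (2k)` costs
`x (2k) - x (2k-1)`, whence the signed sums in `d_{i,0}` and `d_{0,j}`.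
-/

theorem EReal.sInf_add_coe (S : Set EReal) (t : ℝ) :
    sInf S + t = sInf ((· + (t : EReal)) '' S) :=
  map_sInf (⟨⟨(· + (t : EReal)), (· - (t : EReal)), fun _ => EReal.add_sub_cancel_right,
    fun _ => EReal.sub_add_cancel⟩, (EReal.addLECancellable_coe t).add_le_add_iff_right⟩ :
      EReal ≃o EReal) S

namespace AlignCost

variable {X Y : List ℝ} {r : ℝ}

theorem symm (h : AlignCost X Y r) : AlignCost Y X r := by
  induction h with
  | nil => exact .nil
  | match' a b _ ih => rw [abs_sub_comm]; exact .match' b a ih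
  | delX a b _ ih => exact .delY a b ih
  | delY a b _ ih => exact .delX a b ih

theorem even_length_add (h : AlignCost X Y r) : Even (X.length + Y.length) := by
  induction h with
  | nil => exact ⟨0, rfl⟩
  | match' _ _ _ ih => simpa [Nat.add_add_add_comm, parity_simps] using ih
  | delX _ _ _ ih => simpa [add_right_comm _ _ Y.length, parity_simps] using ih
  | delY _ _ _ ih => simpa [← add_assoc, parity_simps] using ih

theorem append_match (a b : ℝ) (h : AlignCost X Y r) :
    AlignCost (X ++ [a]) (Y ++ [b]) (|a - b| + r) := by
  induction h with
  | nil => simpa using AlignCost.match' a b .nil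
  | match' c d _ ih => rw [add_left_comm]; exact .match' c d ih
  | delX c d _ ih => rw [add_left_comm]; exact .delX c d ih
  | delY c d _ ih => rw [add_left_comm]; exact .delY c d ih

theorem append_delX (a b : ℝ) (h : AlignCost X Y r) :
    AlignCost (X ++ [a, b]) Y (|a - b| + r) := by
  induction h with
  | nil => simpa using AlignCost.delX a b .nil
  | match' c d _ ih => rw [add_left_comm]; exact .match' c d ih
  | delX c d _ ih => rw [add_left_comm]; exact .delX c d ih
  | delY c d _ ih => rw [add_left_comm]; exact .delY c d ih

theorem reverse (h : AlignCost X Y r) : AlignCost X.reverse Y.reverse r := by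
  induction h with
  | nil => exact .nil
  | match' a b _ ih => simpa using ih.append_match a b
  | delX a b _ ih => simpa [abs_sub_comm] using ih.append_delX b a
  | delY a b _ ih => simpa [abs_sub_comm] using (ih.symm.append_delX b a).symm

end AlignCost

section dopeE

variable {X Y : List ℝ}

theorem dopeE_le {r : ℝ} (h : AlignCost X Y r) : dopeE X Y ≤ r :=
  sInf_le ⟨r, h, rfl⟩

theorem le_dopeE {v : EReal} (h : ∀ r, AlignCost X Y r → v ≤ r) : v ≤ dopeE X Y :=
  le_sInf <| by rintro _ ⟨r, hr, rfl⟩; exact h r hr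

theorem dopeE_le_dopeE_add {X' Y' : List ℝ} (t : ℝ)
    (h : ∀ r, AlignCost X Y r → AlignCost X' Y' (t + r)) : dopeE X' Y' ≤ dopeE X Y + t := by
  unfold dopeE
  rw [EReal.sInf_add_coe]
  refine sInf_le_sInf ?_
  rintro _ ⟨_, ⟨r, hr, rfl⟩, rfl⟩
  exact ⟨t + r, h r hr, by rw [EReal.coe_add, add_comm]⟩

theorem dopeE_add_le {r : ℝ} (h : AlignCost X Y r) (t : ℝ) :
    dopeE X Y + t ≤ ((t + r : ℝ) : EReal) := by
  rw [EReal.coe_add, add_comm (t : EReal)]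
  gcongr
  exact dopeE_le h

theorem dopeE_comm (X Y : List ℝ) : dopeE X Y = dopeE Y X :=
  le_antisymm (le_dopeE fun _ h => dopeE_le h.symm) (le_dopeE fun _ h => dopeE_le h.symm)

theorem dopeE_reverse (X Y : List ℝ) : dopeE X.reverse Y.reverse = dopeE X Y :=
  le_antisymm (le_dopeE fun _ h => dopeE_le h.reverse)
    (le_dopeE fun _ h => dopeE_le (by simpa using h.reverse))

theorem dopeE_eq_top_of_not_even (h : ¬Even (X.length + Y.length)) : dopeE X Y = ⊤ :=
  eq_top_iff.mpr <| le_dopeE fun _ hr => absurd hr.even_length_add h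

theorem dopeE_nil_nil : dopeE [] [] = 0 :=
  le_antisymm (dopeE_le .nil) (le_dopeE fun _ h => by cases h; exact le_rfl)

theorem dopeE_cons_cons_nil (a b : ℝ) (X : List ℝ) :
    dopeE (a :: b :: X) [] = dopeE X [] + ((|a - b| : ℝ) : EReal) := by
  refine le_antisymm (dopeE_le_dopeE_add _ fun _ h => .delX a b h) (le_dopeE fun _ h => ?_)
  cases h with
  | delX _ _ h => exact dopeE_add_le h _

noncomputable def dopeDelE : List ℝ → List ℝ → EReal
  | a :: b :: X, Y => dopeE X Y + ((|a - b| : ℝ) : EReal)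
  | _, _ => ⊤

theorem dopeE_cons_cons (a b : ℝ) (X Y : List ℝ) :
    dopeE (a :: X) (b :: Y) =
      min (min (dopeE X Y + ((|a - b| : ℝ) : EReal)) (dopeDelE (a :: X) (b :: Y)))
        (dopeDelE (b :: Y) (a :: X)) := by
  refine le_antisymm (le_min (le_min ?_ ?_) ?_) (le_dopeE fun r h => ?_)
  · exact dopeE_le_dopeE_add _ fun _ h => .match' a b h
  · cases X with
    | nil => exact le_top
    | cons a' X => exact dopeE_le_dopeE_add _ fun _ h => .delX a a' h
  · cases Y with
    | nil => exact le_top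
    | cons b' Y => exact dopeE_le_dopeE_add _ fun _ h => .delY b b' h.symm
  · cases h with
    | match' _ _ h => exact min_le_of_left_le <| min_le_of_left_le <| dopeE_add_le h _
    | delX _ _ h => exact min_le_of_left_le <| min_le_of_right_le <| dopeE_add_le h _
    | delY _ _ h => exact min_le_of_right_le <| dopeE_add_le h.symm _

end dopeE

def revPrefix (x : ℕ → ℝ) : ℕ → List ℝ
  | 0 => []
  | n + 1 => x (n + 1) :: revPrefix x n

theorem reverse_revPrefix (x : ℕ → ℝ) (n : ℕ) :
    (revPrefix x n).reverse = (List.range n).map fun k => x (k + 1) := by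
  induction n with
  | zero => rfl
  | succ n ih => simp [revPrefix, List.range_succ, ih]

theorem length_revPrefix (x : ℕ → ℝ) (n : ℕ) : (revPrefix x n).length = n := by
  induction n with
  | zero => rfl
  | succ n ih => simp [revPrefix, ih]

theorem dopeDelE_cons_revPrefix (a : ℝ) (x : ℕ → ℝ) (i : ℕ) (Y : List ℝ) :
    dopeDelE (a :: revPrefix x i) Y =
      if 1 ≤ i then dopeE (revPrefix x (i - 1)) Y + ((|a - x i| : ℝ) : EReal) else ⊤ := by
  cases i <;> rfl

theorem dopeE_revPrefix_nil (x : ℕ → ℝ) {i : ℕ} (hx : ∀ ℓ < i, Odd ℓ → x ℓ ≤ x (ℓ + 1)) :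
    dopeE (revPrefix x i) [] =
      if Even i then ((∑ ℓ ∈ Finset.Icc 1 i, x ℓ * (-1) ^ ℓ : ℝ) : EReal) else ⊤ := by
  induction i using Nat.twoStepInduction with
  | zero => simp [revPrefix, dopeE_nil_nil]
  | one => simp [revPrefix, dopeE_eq_top_of_not_even]
  | more n ih _ =>
    rw [revPrefix, revPrefix, dopeE_cons_cons_nil, ih fun ℓ hℓ => hx ℓ (by omega)]
    by_cases hn : Even n
    · have hodd : Odd (n + 1) := hn.add_one
      have hsum : ∑ ℓ ∈ Finset.Icc 1 (n + 2), x ℓ * (-1) ^ ℓ =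
          ∑ ℓ ∈ Finset.Icc 1 n, x ℓ * (-1) ^ ℓ + (x (n + 2) - x (n + 1)) := by
        rw [Finset.sum_Icc_succ_top (by omega), Finset.sum_Icc_succ_top (by omega),
          hodd.neg_one_pow, (hodd.add_one).neg_one_pow]
        ring
      rw [if_pos hn, if_pos (hn.add (by decide)), hsum, ← EReal.coe_add,
        abs_of_nonneg (sub_nonneg.mpr (hx (n + 1) (by omega) hodd))]
    · rw [if_neg hn, if_neg (by simpa [parity_simps] using hn), EReal.top_add_coe]

theorem neg_one_pow_eq_neg_one_pow_of_even_add {i j : ℕ} (h : Even (i + j)) :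
    (-1 : ℤ) ^ i = (-1) ^ j := by
  rw [neg_one_pow_eq_pow_mod_two, neg_one_pow_eq_pow_mod_two (n := j)]
  congr 1
  grind

theorem dp_eq_dopeE_revPrefix (x y : ℕ → ℝ) (i j : ℕ)
    (hx : ∀ ℓ < i, Odd ℓ → x ℓ ≤ x (ℓ + 1)) (hy : ∀ ℓ < j, Odd ℓ → y ℓ ≤ y (ℓ + 1)) :
    dp x y (fun ℓ => (-1) ^ ℓ) (fun ℓ => (-1) ^ ℓ) i j =
      dopeE (revPrefix x i) (revPrefix y j) := by
  induction i, j using dp.induct (fun ℓ => (-1) ^ ℓ) (fun ℓ => (-1) ^ ℓ) with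
  | case1 => rw [dp]; exact dopeE_nil_nil.symm
  | case2 i _ | case3 i _ =>
    rw [dp, revPrefix.eq_1 y, dopeE_revPrefix_nil x hx]
    simp [Nat.even_iff]
  | case4 j _ | case5 j _ =>
    rw [dp, revPrefix.eq_1 x, dopeE_comm, dopeE_revPrefix_nil y hy]
    simp [Nat.even_iff]
  | case6 i j ih_match ih_delX ih_delY =>
    rw [dp, revPrefix, revPrefix, dopeE_cons_cons, dopeDelE_cons_revPrefix,
      dopeDelE_cons_revPrefix, dopeE_comm (revPrefix y _)]
    refine congrArg₂ min (congrArg₂ min ?_ ?_) ?_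
    · split_ifs with hsign
      · rw [ih_match (fun ℓ hℓ => hx ℓ (by omega)) (fun ℓ hℓ => hy ℓ (by omega))]
      · have hij : ¬Even (i + j) := fun h =>
          hsign (neg_one_pow_eq_neg_one_pow_of_even_add (by grind))
        rw [dopeE_eq_top_of_not_even (by rwa [length_revPrefix, length_revPrefix]),
          EReal.top_add_coe]
    · split_ifs with hi
      · rw [ih_delX hi (fun ℓ hℓ => hx ℓ (by omega)) hy]; rfl
      · rfl
    · split_ifs with hj
      · rw [ih_delY hj hx (fun ℓ hℓ => hy ℓ (by omega))]; rfl
      · rfl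

/-- Correctness of the DOPE dynamic programming recurrence: for strictly
alternating critical point sequences (1-indexed, starting with a min, so the
sign indicator at index `ℓ` is `(-1)^ℓ`), the DP value `d_{M_c, N_c}` equals
the DOPE distance. -/
theorem dp_eq_dope (Mc Nc : ℕ) (x y : ℕ → ℝ) (xm ym : ℕ → ℤ)
    (hxm : ∀ ℓ, xm ℓ = (-1) ^ ℓ) (hym : ∀ ℓ, ym ℓ = (-1) ^ ℓ)
    (haltx : ∀ ℓ, 1 ≤ ℓ → ℓ < Mc → (x ℓ < x (ℓ + 1) ↔ Odd ℓ))
    (halty : ∀ ℓ, 1 ≤ ℓ → ℓ < Nc → (y ℓ < y (ℓ + 1) ↔ Odd ℓ)) :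
    dp x y xm ym Mc Nc =
      dopeE ((List.range Mc).map fun k => x (k + 1))
            ((List.range Nc).map fun k => y (k + 1)) := by
  obtain rfl : xm = fun ℓ => (-1) ^ ℓ := funext hxm
  obtain rfl : ym = fun ℓ => (-1) ^ ℓ := funext hym
  rw [dp_eq_dopeE_revPrefix x y Mc Nc (fun ℓ hℓ ho => ((haltx ℓ ho.pos hℓ).2 ho).le)
    (fun ℓ hℓ ho => ((halty ℓ ho.pos hℓ).2 ho).le), ← reverse_revPrefix, ← reverse_revPrefix,
    dopeE_reverse]
end

section
/- The circular DOPE distance can be computed by fixing one series: C-DOPE(x,y) = min( min_j dope(x, y shifted by j), min_j dope(x shifted by 1, y shifted by j) ), where shifts are circular shifts of the critical point sequences. -/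
/-- The circular DOPE distance: the minimum of the (interval) DOPE distance
over all circular shifts of the two critical point sequences. -/
noncomputable def cdope (x y : List ℝ) : ℝ :=
  sInf {c | ∃ i < x.length, ∃ j < y.length, c = dope (x.rotate i) (y.rotate j)}

theorem align_nonneg : ∀ {u v : List ℝ} {c : ℝ}, AlignCost u v c → 0 ≤ c := by
  intro u v c h
  induction h with
  | nil => exact le_rfl
  | match' a b hs ih => have := abs_nonneg (a - b); linarith
  | delX a b hs ih => have := abs_nonneg (a - b); linarith
  | delY a b hs ih => have := abs_nonneg (a - b); linarith

theorem align_append : ∀ {u v : List ℝ} {c : ℝ} {u' v' : List ℝ} {c' : ℝ},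
    AlignCost u v c → AlignCost u' v' c' → AlignCost (u ++ u') (v ++ v') (c + c') := by
  intro u v c u' v' c' h h'
  induction h with
  | nil => simpa using h'
  | match' a b hs ih => rw [add_assoc]; exact .match' a b ih
  | delX a b hs ih => rw [add_assoc]; exact .delX a b ih
  | delY a b hs ih => rw [add_assoc]; exact .delY a b ih

theorem exists_align_s19 : ∀ (u v : List ℝ), Even u.length → Even v.length →
    ∃ c, AlignCost u v c
  | [], [], _, _ => ⟨0, .nil⟩
  | [], [a], _, h => by simp at h
  | [], a :: b :: v, hu, hv => by
      obtain ⟨c, hc⟩ := exists_align_s19 [] v hu (by simpa [Nat.even_add_one, parity_simps] using hv)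
      exact ⟨_, .delY a b hc⟩
  | [a], _, h, _ => by simp at h
  | a :: b :: u, v, hu, hv => by
      obtain ⟨c, hc⟩ := exists_align_s19 u v (by simpa [Nat.even_add_one, parity_simps] using hu) hv
      exact ⟨_, .delX a b hc⟩

theorem align_split : ∀ {u v : List ℝ} {c : ℝ}, AlignCost u v c →
    ∀ t ≤ u.length, ∃ u1 u2 v1 v2 : List ℝ, ∃ c1 c2 : ℝ,
      u = u1 ++ u2 ∧ v = v1 ++ v2 ∧ (u1.length = t ∨ u1.length = t + 1) ∧
      AlignCost u1 v1 c1 ∧ AlignCost u2 v2 c2 ∧ c1 + c2 = c := by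
  intro u v c h
  induction h with
  | nil =>
      intro t ht
      have ht0 : t = 0 := by simpa using ht
      exact ⟨[], [], [], [], 0, 0, rfl, rfl, Or.inl ht0.symm, .nil, .nil, by ring⟩
  | match' a b hs ih =>
      rename_i xs ys c
      intro t ht
      match t with
      | 0 => exact ⟨[], _, [], _, 0, _, rfl, rfl, Or.inl rfl, .nil, .match' a b hs, by ring⟩
      | s + 1 =>
          obtain ⟨u1, u2, v1, v2, c1, c2, hu, hv, hl, h1, h2, hc⟩ :=
            ih s (by simpa using ht)
          exact ⟨a :: u1, u2, b :: v1, v2, |a - b| + c1, c2, by simp [hu], by simp [hv],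
            by rcases hl with h | h <;> simp [h], .match' a b h1, h2, by rw [add_assoc, hc]⟩
  | delX a b hs ih =>
      rename_i xs ys c
      intro t ht
      match t with
      | 0 => exact ⟨[], _, [], _, 0, _, rfl, rfl, Or.inl rfl, .nil, .delX a b hs, by ring⟩
      | 1 => exact ⟨[a, b], xs, [], ys, |a - b| + 0, c, rfl, rfl, Or.inr rfl,
          .delX a b .nil, hs, by ring⟩
      | s + 2 =>
          obtain ⟨u1, u2, v1, v2, c1, c2, hu, hv, hl, h1, h2, hc⟩ :=
            ih s (by simpa using ht)
          exact ⟨a :: b :: u1, u2, v1, v2, |a - b| + c1, c2, by simp [hu], hv,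
            by simp only [List.length_cons]; omega, .delX a b h1, h2,
            by rw [add_assoc, hc]⟩
  | delY a b hs ih =>
      intro t ht
      obtain ⟨u1, u2, v1, v2, c1, c2, hu, hv, hl, h1, h2, hc⟩ := ih t ht
      exact ⟨u1, u2, a :: b :: v1, v2, |a - b| + c1, c2, hu, by simp [hv], hl,
        .delY a b h1, h2, by rw [add_assoc, hc]⟩

theorem align_rotate {u v : List ℝ} {c : ℝ} (h : AlignCost u v c)
    (t : ℕ) (ht : t ≤ u.length) :
    ∃ p q, (p = t ∨ p = t + 1) ∧ AlignCost (u.rotate p) (v.rotate q) c := by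
  obtain ⟨u1, u2, v1, v2, c1, c2, hu, hv, hl, h1, h2, hc⟩ := align_split h t ht
  refine ⟨u1.length, v1.length, hl, ?_⟩
  have hru : u.rotate u1.length = u2 ++ u1 := by
    rw [hu, List.rotate_eq_drop_append_take (by simp), List.drop_left, List.take_left]
  have hrv : v.rotate v1.length = v2 ++ v1 := by
    rw [hv, List.rotate_eq_drop_append_take (by simp), List.drop_left, List.take_left]
  rw [hru, hrv, ← hc, add_comm]
  exact align_append h2 h1

theorem dope_nonneg (u v : List ℝ) : 0 ≤ dope u v :=
  Real.sInf_nonneg fun _ hc => align_nonneg hc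

/-- Key reduction: any alignment of rotated copies yields an equal-cost
alignment where `x` is rotated by `0` or `1`. -/
theorem align_reduce {x y : List ℝ} (hx2 : 2 ≤ x.length) (hy0 : 0 < y.length)
    {i j : ℕ} (hi : i < x.length) {c : ℝ}
    (h : AlignCost (x.rotate i) (y.rotate j) c) :
    ∃ i', (i' = 0 ∨ i' = 1) ∧ ∃ j' < y.length,
      AlignCost (x.rotate i') (y.rotate j') c := by
  obtain ⟨p, q, hp, hal⟩ := align_rotate h (x.length - i) (by simp)
  rw [List.rotate_rotate, List.rotate_rotate] at hal
  have hyq : (y.rotate (j + q)) = y.rotate ((j + q) % y.length) := (List.rotate_mod _ _).symm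
  rcases hp with hp | hp
  · refine ⟨0, Or.inl rfl, (j + q) % y.length, Nat.mod_lt _ hy0, ?_⟩
    have : i + p = x.length := by omega
    rwa [this, List.rotate_length, ← List.rotate_zero x, hyq] at hal
  · refine ⟨1, Or.inr rfl, (j + q) % y.length, Nat.mod_lt _ hy0, ?_⟩
    have : i + p = x.length + 1 := by omega
    rw [this, ← List.rotate_rotate, List.rotate_length] at hal
    rwa [hyq] at hal

/-- C-DOPE can be computed by holding one series fixed: it suffices to consider
the unshifted `x` and the shift of `x` by one, minimizing over all shifts of
`y`. -/
theorem cdope_two_shifts (x y : List ℝ) (hx : x ≠ []) (hy : y ≠ [])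
    (hex : Even x.length) (hey : Even y.length) :
    cdope x y =
      min (sInf {c | ∃ j < y.length, c = dope x (y.rotate j)})
          (sInf {c | ∃ j < y.length, c = dope (x.rotate 1) (y.rotate j)}) := by
  have hx0 : 0 < x.length := List.length_pos_iff.2 hx
  have hy0 : 0 < y.length := List.length_pos_iff.2 hy
  have hx2 : 2 ≤ x.length := by
    rcases hex with ⟨k, hk⟩; omega
  set S : Set ℝ := {c | ∃ i < x.length, ∃ j < y.length, c = dope (x.rotate i) (y.rotate j)}
    with hS
  set A : Set ℝ := {c | ∃ j < y.length, c = dope x (y.rotate j)} with hA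
  set B : Set ℝ := {c | ∃ j < y.length, c = dope (x.rotate 1) (y.rotate j)} with hB
  have hSb : BddBelow S := ⟨0, by rintro c ⟨i, _, j, _, rfl⟩; exact dope_nonneg _ _⟩
  have hAb : BddBelow A := ⟨0, by rintro c ⟨j, _, rfl⟩; exact dope_nonneg _ _⟩
  have hBb : BddBelow B := ⟨0, by rintro c ⟨j, _, rfl⟩; exact dope_nonneg _ _⟩
  have hAne : A.Nonempty := ⟨dope x (y.rotate 0), 0, hy0, rfl⟩
  have hBne : B.Nonempty := ⟨dope (x.rotate 1) (y.rotate 0), 0, hy0, rfl⟩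
  have hSne : S.Nonempty := ⟨dope (x.rotate 0) (y.rotate 0), 0, hx0, 0, hy0, rfl⟩
  refine le_antisymm (le_min ?_ ?_) ?_
  · refine csInf_le_csInf hSb hAne ?_
    rintro c ⟨j, hj, rfl⟩
    exact ⟨0, hx0, j, hj, by rw [List.rotate_zero]⟩
  · refine csInf_le_csInf hSb hBne ?_
    rintro c ⟨j, hj, rfl⟩
    exact ⟨1, by omega, j, hj, rfl⟩
  · refine le_csInf hSne ?_
    rintro c ⟨i, hi, j, hj, rfl⟩
    have hne : {d | AlignCost (x.rotate i) (y.rotate j) d}.Nonempty := by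
      obtain ⟨d, hd⟩ := exists_align_s19 (x.rotate i) (y.rotate j)
        (by simpa using hex) (by simpa using hey)
      exact ⟨d, hd⟩
    refine le_csInf hne ?_
    rintro d hd
    obtain ⟨i', hi', j', hj', hal⟩ := align_reduce hx2 hy0 hi hd
    have hbdd : BddBelow {e | AlignCost (x.rotate i') (y.rotate j') e} :=
      ⟨0, fun e he => align_nonneg he⟩
    have h1 : dope (x.rotate i') (y.rotate j') ≤ d := csInf_le hbdd hal
    rcases hi' with rfl | rfl
    · have h2 : sInf A ≤ dope (x.rotate 0) (y.rotate j') := by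
        rw [List.rotate_zero]
        exact csInf_le hAb ⟨j', hj', rfl⟩
      exact le_trans (min_le_left _ _) (le_trans h2 h1)
    · have h2 : sInf B ≤ dope (x.rotate 1) (y.rotate j') :=
        csInf_le hBb ⟨j', hj', rfl⟩
      exact le_trans (min_le_right _ _) (le_trans h2 h1)
end
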